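/- If a semiloopoid G over M satisfies G₂ = {(g,h) ∈ G×G : β(g) = α(h)} and α(gh) = α(g) and β(gh) = β(h) for all (g,h) ∈ G₂, then G satisfies the unities associativity condition: for all g, h ∈ G and e ∈ M, each of the products e(gh) = (eg)h, (ge)h = g(eh), and (gh)e = g(he) holds in the sense that if one side is defined then so is the other and they are equal. -/

import Mathlib

/-- A semiloopoid over a set of units `M ⊆ G`: maps `α, β : G → M ⊆ G` fixing
units, a set `G₂` of composable pairs, and a partial multiplication `m : G₂ → G`
such that `α(g)g = g`, `gβ(g) = g`, and all left and right translations are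
injective on their domains. -/
structure Semiloopoid (G : Type*) where
  M : Set G
  α : G → G
  β : G → G
  α_mem : ∀ g : G, α g ∈ M
  β_mem : ∀ g : G, β g ∈ M
  α_unit : ∀ u ∈ M, α u = u
  β_unit : ∀ u ∈ M, β u = u
  G₂ : Set (G × G)
  mul : (g : G) → (h : G) → (g, h) ∈ G₂ → G
  unit_left_comp : ∀ g : G, (α g, g) ∈ G₂
  unit_left : ∀ g : G, mul (α g) g (unit_left_comp g) = g
  unit_right_comp : ∀ g : G, (g, β g) ∈ G₂
  unit_right : ∀ g : G, mul g (β g) (unit_right_comp g) = g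
  left_inj : ∀ (g h h' : G) (p : (g, h) ∈ G₂) (p' : (g, h') ∈ G₂),
    mul g h p = mul g h' p' → h = h'
  right_inj : ∀ (g h h' : G) (p : (h, g) ∈ G₂) (p' : (h', g) ∈ G₂),
    mul h g p = mul h' g p' → h = h'

/-!
When composability means `β g = α h`, a unit `e` composes with `g` only as `e = α g` on the left
or `e = β g` on the right, and then `eg = g` resp. `ge = g`. So either side of each of the three
laws is defined exactly when `g` and `h` are composable and `e` is the unit at its position
(for the outer laws via `α (gh) = α g` and `β (gh) = β h`), and then both sides equal `gh`.
-/

namespace Semiloopoid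

variable {G : Type*} (S : Semiloopoid G)

theorem mul_congr {g g' h h' : G} (hg : g = g') (hh : h = h') (p : (g, h) ∈ S.G₂)
    (p' : (g', h') ∈ S.G₂) : S.mul g h p = S.mul g' h' p' := by
  subst hg hh
  rfl

section Composable

variable {S} (hcomp : ∀ {g h : G}, (g, h) ∈ S.G₂ → S.β g = S.α h)
include hcomp

theorem eq_α_of_unit_comp {e g : G} (he : e ∈ S.M) (q : (e, g) ∈ S.G₂) : e = S.α g :=
  S.β_unit e he ▸ hcomp q

theorem eq_β_of_comp_unit {g e : G} (he : e ∈ S.M) (q : (g, e) ∈ S.G₂) : e = S.β g :=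
  (S.α_unit e he ▸ hcomp q).symm

theorem unit_mul {e g : G} (he : e ∈ S.M) (q : (e, g) ∈ S.G₂) : S.mul e g q = g := by
  obtain rfl := eq_α_of_unit_comp hcomp he q
  exact S.unit_left g

theorem mul_unit {g e : G} (he : e ∈ S.M) (q : (g, e) ∈ S.G₂) : S.mul g e q = g := by
  obtain rfl := eq_β_of_comp_unit hcomp he q
  exact S.unit_right g

end Composable

section UnitiesAssoc

variable {S} (hG₂ : ∀ g h : G, (g, h) ∈ S.G₂ ↔ S.β g = S.α h) {g h e : G} (he : e ∈ S.M)
include hG₂ he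

theorem unit_comp_iff : (e, g) ∈ S.G₂ ↔ e = S.α g := by
  rw [hG₂, S.β_unit e he]

theorem comp_unit_iff : (g, e) ∈ S.G₂ ↔ S.β g = e := by
  rw [hG₂, S.α_unit e he]

theorem assoc_of_unit_left
    (hα : ∀ (g h : G) (p : (g, h) ∈ S.G₂), S.α (S.mul g h p) = S.α g) :
    ((∃ p : (g, h) ∈ S.G₂, (e, S.mul g h p) ∈ S.G₂) ↔
        (∃ q : (e, g) ∈ S.G₂, (S.mul e g q, h) ∈ S.G₂)) ∧
      ∀ (p : (g, h) ∈ S.G₂) (p' : (e, S.mul g h p) ∈ S.G₂)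
        (q : (e, g) ∈ S.G₂) (q' : (S.mul e g q, h) ∈ S.G₂),
        S.mul e (S.mul g h p) p' = S.mul (S.mul e g q) h q' := by
  have hcomp {g h : G} := (hG₂ g h).mp
  refine ⟨⟨fun ⟨p, p'⟩ => ?_, fun ⟨q, q'⟩ => ?_⟩, fun p p' q q' => ?_⟩
  · have q : (e, g) ∈ S.G₂ :=
      (unit_comp_iff hG₂ he).2 (((unit_comp_iff hG₂ he).1 p').trans (hα g h p))
    exact ⟨q, by rwa [unit_mul hcomp he q]⟩
  · have p : (g, h) ∈ S.G₂ := by rwa [unit_mul hcomp he q] at q'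
    exact ⟨p, (unit_comp_iff hG₂ he).2 (((unit_comp_iff hG₂ he).1 q).trans (hα g h p).symm)⟩
  · rw [unit_mul hcomp he p']
    exact mul_congr S (unit_mul hcomp he q).symm rfl _ _

theorem assoc_of_unit_middle :
    ((∃ p : (g, e) ∈ S.G₂, (S.mul g e p, h) ∈ S.G₂) ↔
        (∃ q : (e, h) ∈ S.G₂, (g, S.mul e h q) ∈ S.G₂)) ∧
      ∀ (p : (g, e) ∈ S.G₂) (p' : (S.mul g e p, h) ∈ S.G₂)
        (q : (e, h) ∈ S.G₂) (q' : (g, S.mul e h q) ∈ S.G₂),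
        S.mul (S.mul g e p) h p' = S.mul g (S.mul e h q) q' := by
  have hcomp {g h : G} := (hG₂ g h).mp
  refine ⟨⟨fun ⟨p, p'⟩ => ?_, fun ⟨q, q'⟩ => ?_⟩, fun p p' q q' => ?_⟩
  · rw [mul_unit hcomp he p] at p'
    have q : (e, h) ∈ S.G₂ :=
      (unit_comp_iff hG₂ he).2 (((comp_unit_iff hG₂ he).1 p).symm.trans (hcomp p'))
    exact ⟨q, by rwa [unit_mul hcomp he q]⟩
  · rw [unit_mul hcomp he q] at q'
    have p : (g, e) ∈ S.G₂ :=
      (comp_unit_iff hG₂ he).2 ((hcomp q').trans ((unit_comp_iff hG₂ he).1 q).symm)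
    exact ⟨p, by rwa [mul_unit hcomp he p]⟩
  · exact mul_congr S (mul_unit hcomp he p) (unit_mul hcomp he q).symm _ _

theorem assoc_of_unit_right
    (hβ : ∀ (g h : G) (p : (g, h) ∈ S.G₂), S.β (S.mul g h p) = S.β h) :
    ((∃ p : (g, h) ∈ S.G₂, (S.mul g h p, e) ∈ S.G₂) ↔
        (∃ q : (h, e) ∈ S.G₂, (g, S.mul h e q) ∈ S.G₂)) ∧
      ∀ (p : (g, h) ∈ S.G₂) (p' : (S.mul g h p, e) ∈ S.G₂)
        (q : (h, e) ∈ S.G₂) (q' : (g, S.mul h e q) ∈ S.G₂),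
        S.mul (S.mul g h p) e p' = S.mul g (S.mul h e q) q' := by
  have hcomp {g h : G} := (hG₂ g h).mp
  refine ⟨⟨fun ⟨p, p'⟩ => ?_, fun ⟨q, q'⟩ => ?_⟩, fun p p' q q' => ?_⟩
  · have q : (h, e) ∈ S.G₂ :=
      (comp_unit_iff hG₂ he).2 ((hβ g h p).symm.trans ((comp_unit_iff hG₂ he).1 p'))
    exact ⟨q, by rwa [mul_unit hcomp he q]⟩
  · have p : (g, h) ∈ S.G₂ := by rwa [mul_unit hcomp he q] at q'
    exact ⟨p, (comp_unit_iff hG₂ he).2 ((hβ g h p).trans ((comp_unit_iff hG₂ he).1 q))⟩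
  · rw [mul_unit hcomp he p']
    exact mul_congr S rfl (mul_unit hcomp he q).symm _ _

end UnitiesAssoc

end Semiloopoid

/-- If a semiloopoid `G` over `M` satisfies `G₂ = {(g,h) : β(g) = α(h)}`,
`α(gh) = α(g)` and `β(gh) = β(h)`, then it satisfies the unities associativity
condition: for all `g, h ∈ G` and every unit `e ∈ M`, each of
`e(gh) = (eg)h`, `(ge)h = g(eh)` and `(gh)e = g(he)` holds in the sense that if
one side is defined then so is the other and they are equal. -/
theorem semiloopoid_anchor_unitiesAssoc {G : Type*} (S : Semiloopoid G)
    (hG₂ : ∀ g h : G, (g, h) ∈ S.G₂ ↔ S.β g = S.α h)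
    (hα : ∀ (g h : G) (p : (g, h) ∈ S.G₂), S.α (S.mul g h p) = S.α g)
    (hβ : ∀ (g h : G) (p : (g, h) ∈ S.G₂), S.β (S.mul g h p) = S.β h) :
    ∀ (g h : G), ∀ e ∈ S.M,
      -- e(gh) = (eg)h
      (((∃ p : (g, h) ∈ S.G₂, (e, S.mul g h p) ∈ S.G₂) ↔
          (∃ q : (e, g) ∈ S.G₂, (S.mul e g q, h) ∈ S.G₂)) ∧
        ∀ (p : (g, h) ∈ S.G₂) (p' : (e, S.mul g h p) ∈ S.G₂)
          (q : (e, g) ∈ S.G₂) (q' : (S.mul e g q, h) ∈ S.G₂),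
          S.mul e (S.mul g h p) p' = S.mul (S.mul e g q) h q') ∧
      -- (ge)h = g(eh)
      (((∃ p : (g, e) ∈ S.G₂, (S.mul g e p, h) ∈ S.G₂) ↔
          (∃ q : (e, h) ∈ S.G₂, (g, S.mul e h q) ∈ S.G₂)) ∧
        ∀ (p : (g, e) ∈ S.G₂) (p' : (S.mul g e p, h) ∈ S.G₂)
          (q : (e, h) ∈ S.G₂) (q' : (g, S.mul e h q) ∈ S.G₂),
          S.mul (S.mul g e p) h p' = S.mul g (S.mul e h q) q') ∧
      -- (gh)e = g(he)
      (((∃ p : (g, h) ∈ S.G₂, (S.mul g h p, e) ∈ S.G₂) ↔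
          (∃ q : (h, e) ∈ S.G₂, (g, S.mul h e q) ∈ S.G₂)) ∧
        ∀ (p : (g, h) ∈ S.G₂) (p' : (S.mul g h p, e) ∈ S.G₂)
          (q : (h, e) ∈ S.G₂) (q' : (g, S.mul h e q) ∈ S.G₂),
          S.mul (S.mul g h p) e p' = S.mul g (S.mul h e q) q') := fun _ _ _ he =>
  ⟨Semiloopoid.assoc_of_unit_left hG₂ he hα, Semiloopoid.assoc_of_unit_middle hG₂ he,
    Semiloopoid.assoc_of_unit_right hG₂ he hβ⟩
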